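/- Let ε : F(n,1) → {−1,1} be a function on the edges of the n-dimensional hypercube such that p(s,ε) = −1 for every square s. Then the quantity ε(θ)·sign(φ(θ)) is the same for every monotone path of edges θ of length n from (0,…,0) to (1,…,1), where φ(θ) ∈ S_n is the permutation recording the order in which θ traverses the coordinate directions, and sign denotes the sign of the permutation. -/

import Mathlib

/-!
A monotone path from `0` to `1` is determined by the order `σ` in which it flips the
coordinates. Exchanging two consecutive steps of the path trades its two edges at these steps
for the other two boundary edges of a square; since `p(s, ε) = -1` and the factors are units
of `ℤ`, this changes the sign of the product of `ε` along the path, and it also multiplies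
`σ` by a transposition. Adjacent transpositions generate `Sₙ`, so `ε(θ) · sign σ` is the same
for all paths.
-/

abbrev Vertex (n : ℕ) := Fin n → Bool
abbrev Face (n : ℕ) := Fin n → Option Bool

abbrev IsEdge {n : ℕ} (a : Face n) : Prop :=
  (Finset.univ.filter fun i => a i = none).card = 1

abbrev IsSq {n : ℕ} (s : Face n) : Prop :=
  (Finset.univ.filter fun i => s i = none).card = 2

/-- Endpoint of a face: replace every `*` (i.e. `none`) by the bit `b`. -/
abbrev ep {n : ℕ} (b : Bool) (a : Face n) : Vertex n := fun i => (a i).getD b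

/-- A path of edges of length `k` from `u` to `w`. -/
def IsPathFromTo (n k : ℕ) (θ : Fin k → Face n) (u w : Vertex n) : Prop :=
  (∀ i, IsEdge (θ i)) ∧
  (∀ (i : Fin k) (h : i.val + 1 < k), ep true (θ i) = ep false (θ ⟨i.val + 1, h⟩)) ∧
  (∀ h : 0 < k, ep false (θ ⟨0, h⟩) = u) ∧
  (∀ h : 0 < k, ep true (θ ⟨k - 1, Nat.sub_lt h one_pos⟩) = w) ∧
  (k = 0 → u = w)

/-- Product of `ε` over the four boundary edges of the square `s`. -/
def pSq (n : ℕ) (s : Face n) (ε : Face n → ℤ) : ℤ :=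
  ∏ a ∈ Finset.univ.filter (fun a : Face n => IsEdge a ∧ ∀ j, s j ≠ none → a j = s j), ε a

open Function (Injective update update_apply update_of_ne)

namespace Equiv.Perm

theorem eq_of_mul_swap_succ_invariant {α : Type*} {n : ℕ} (f : Perm (Fin n) → α)
    (hf : ∀ σ (a b : Fin n), (a : ℕ) + 1 = b → f (σ * swap a b) = f σ) (σ τ : Perm (Fin n)) :
    f σ = f τ := by
  cases n with
  | zero => rw [Subsingleton.elim σ τ]
  | succ m =>
    have hconst (ρ : Perm (Fin (m + 1))) : f ρ = f 1 := by
      induction ρ using Submonoid.induction_of_closure_eq_top_right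
        (mclosure_swap_castSucc_succ m) with
      | one => rfl
      | mul_right ρ _ hswap ih =>
        obtain ⟨i, rfl⟩ := hswap
        rw [hf ρ _ _ (by simp), ih]
    rw [hconst σ, hconst τ]

end Equiv.Perm

theorem isEdge_iff {n : ℕ} {a : Face n} : IsEdge a ↔ ∃ k, ∀ j, a j = none ↔ j = k := by
  simp [Finset.card_eq_one, Finset.ext_iff]

theorem isSq_of_forall_eq_none_iff {n : ℕ} {s : Face n} {p q : Fin n} (hpq : p ≠ q)
    (hs : ∀ j, s j = none ↔ j = p ∨ j = q) : IsSq s := by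
  rw [IsSq, Finset.card_eq_two]
  exact ⟨p, q, hpq, by ext j; simp [hs]⟩

theorem ep_true_eq_update {n : ℕ} {a : Face n} {k : Fin n} (ha : ∀ j, a j = none ↔ j = k) :
    ep true a = update (ep false a) k true := by
  funext j
  rcases eq_or_ne j k with rfl | hj
  · simp [ep, (ha j).2 rfl]
  · obtain ⟨c, hc⟩ := Option.ne_none_iff_exists'.1 (mt (ha j).1 hj)
    simp [ep, hj, hc]

theorem eq_update_ep_false {n : ℕ} {a : Face n} {k : Fin n} (ha : ∀ j, a j = none ↔ j = k) :
    a = update (some ∘ ep false a) k none := by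
  funext j
  rcases eq_or_ne j k with rfl | hj
  · simp [(ha j).2 rfl]
  · obtain ⟨c, hc⟩ := Option.ne_none_iff_exists'.1 (mt (ha j).1 hj)
    simp [ep, hj, hc]

theorem pSq_eq {n : ℕ} {s : Face n} {p q : Fin n} (hpq : p ≠ q)
    (hs : ∀ j, s j = none ↔ j = p ∨ j = q) (ε : Face n → ℤ) :
    pSq n s ε = ε (update s p (some false)) * ε (update s p (some true)) *
      (ε (update s q (some false)) * ε (update s q (some true))) := by
  let e : Bool × Bool → Face n := fun cb => update s (cond cb.1 q p) (some cb.2)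
  have he_inj : Injective e := by
    rintro ⟨c, β⟩ ⟨c', β'⟩ hcc
    have hp := congrFun hcc p
    have hq := congrFun hcc q
    cases c <;> cases c' <;> simp_all [e, update_apply, hpq.symm, (hs p).2, (hs q).2]
  have he_mem (cb : Bool × Bool) : e cb ∈ Finset.univ.filter
      (fun a : Face n => IsEdge a ∧ ∀ j, s j ≠ none → a j = s j) := by
    obtain ⟨c, β⟩ := cb
    refine Finset.mem_filter.2 ⟨Finset.mem_univ _, isEdge_iff.2 ⟨cond c p q, fun j => ?_⟩,
      fun j hj => ?_⟩
    · cases c <;> by_cases hjp : j = p <;> by_cases hjq : j = q <;>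
        simp_all [e, update_apply, hpq.symm]
    · cases c <;> simp_all [e]
  have he_surj : ∀ a ∈ Finset.univ.filter
      (fun a : Face n => IsEdge a ∧ ∀ j, s j ≠ none → a j = s j), ∃ cb, e cb = a := by
    intro a ha
    obtain ⟨ha_edge, ha_s⟩ := (Finset.mem_filter.1 ha).2
    obtain ⟨k, hk⟩ := isEdge_iff.1 ha_edge
    have hk_star : s k = none := by
      by_contra hsk
      exact hsk (ha_s k hsk ▸ (hk k).2 rfl)
    obtain ⟨c, rfl⟩ : ∃ c, cond c p q = k := by
      rcases (hs k).1 hk_star with rfl | rfl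
      exacts [⟨true, rfl⟩, ⟨false, rfl⟩]
    obtain ⟨β, hβ⟩ := Option.ne_none_iff_exists'.1
      (mt (hk (cond c q p)).1 (by cases c <;> simp [hpq, hpq.symm]))
    refine ⟨(c, β), funext fun j => ?_⟩
    by_cases hj : j = cond c q p
    · subst hj; simp [e, hβ]
    by_cases hj' : j = cond c p q
    · subst hj'
      simpa [e, hj, (hk _).2 rfl] using hk_star
    · have hjs : s j ≠ none := by
        rw [Ne, hs]
        cases c <;> simp_all
      simp [e, hj, ha_s j hjs]
  rw [pSq, ← Finset.prod_nbij e (fun cb _ => he_mem cb) he_inj.injOn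
    (fun a ha => by simpa using he_surj a ha) (fun _ _ => rfl) (s := Finset.univ)]
  simp only [Fintype.prod_prod_type, Fintype.prod_bool, cond_true, cond_false, e]
  ring

section Path

open Equiv

variable {n : ℕ}

/-- `pathEdge σ` is the monotone path from `0` to `1` that flips the coordinates
`σ 0, σ 1, …` in this order, and `pathVertex σ i` its vertex after `i` steps. -/
def pathVertex (σ : Perm (Fin n)) (i : ℕ) : Vertex n := fun j => decide ((σ.symm j : ℕ) < i)

def pathEdge (σ : Perm (Fin n)) (i : Fin n) : Face n := update (some ∘ pathVertex σ i) (σ i) none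

theorem pathVertex_zero (σ : Perm (Fin n)) : pathVertex σ 0 = fun _ => false := by
  funext j
  simp [pathVertex]

theorem pathVertex_succ (σ : Perm (Fin n)) (i : Fin n) :
    pathVertex σ (i + 1) = update (pathVertex σ i) (σ i) true := by
  funext j
  rcases eq_or_ne j (σ i) with rfl | hj
  · simp [pathVertex]
  · have : (σ.symm j : ℕ) ≠ i := fun h => hj (by rw [← Fin.ext h, apply_symm_apply])
    simp only [pathVertex, update_of_ne hj, decide_eq_decide]
    omega

theorem eq_pathEdge_of_isPathFromTo {θ : Fin n → Face n}
    (hθ : IsPathFromTo n n θ (fun _ => false) (fun _ => true)) {σ : Perm (Fin n)}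
    (hσ : ∀ i, θ i (σ i) = none) : θ = pathEdge σ := by
  have hstar (i : Fin n) (j : Fin n) : θ i j = none ↔ j = σ i := by
    obtain ⟨k, hk⟩ := isEdge_iff.1 (hθ.1 i)
    rw [hk, (hk _).1 (hσ i)]
  have hvertex (m : ℕ) (hm : m < n) : ep false (θ ⟨m, hm⟩) = pathVertex σ m := by
    induction m with
    | zero => rw [hθ.2.2.1 hm, pathVertex_zero]
    | succ m ih =>
      rw [← hθ.2.1 ⟨m, by omega⟩ hm, ep_true_eq_update (hstar _), ih]
      exact (pathVertex_succ σ ⟨m, by omega⟩).symm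
  funext i
  rw [eq_update_ep_false (hstar i), hvertex i i.isLt]
  rfl

end Path

section Swap

open Equiv

variable {n : ℕ} {σ : Perm (Fin n)} {a b : Fin n}

def swapSquare (σ : Perm (Fin n)) (a b : Fin n) : Face n := update (pathEdge σ a) (σ b) none

theorem swapSquare_eq_none_iff (j : Fin n) : swapSquare σ a b j = none ↔ j = σ a ∨ j = σ b := by
  by_cases hb : j = σ b <;> by_cases ha : j = σ a <;> simp_all [swapSquare, pathEdge]

theorem symm_mul_swap_apply (σ : Perm (Fin n)) (a b j : Fin n) :
    (σ * swap a b).symm j = swap a b (σ.symm j) := by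
  rw [Perm.mul_def, symm_trans_apply, symm_swap]

theorem swapSquare_mul_swap : swapSquare (σ * swap a b) a b = swapSquare σ a b := by
  funext j
  by_cases hb : j = σ b
  · simp [swapSquare, pathEdge, update_apply, hb]
  by_cases ha : j = σ a
  · simp [swapSquare, pathEdge, update_apply, ha]
  have hj : (σ * swap a b).symm j = σ.symm j := by
    rw [symm_mul_swap_apply, swap_apply_of_ne_of_ne (mt (symm_apply_eq σ).1 ha)
      (mt (symm_apply_eq σ).1 hb)]
  simp [swapSquare, pathEdge, pathVertex, ha, hb, hj]

theorem update_swapSquare_false (hab : a < b) :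
    update (swapSquare σ a b) (σ b) (some false) = pathEdge σ a := by
  funext j
  by_cases hb : j = σ b <;> by_cases ha : j = σ a <;>
    simp_all [swapSquare, pathEdge, pathVertex, update_apply, hab.le]

theorem update_swapSquare_true (hab : (a : ℕ) + 1 = b) :
    update (swapSquare σ a b) (σ a) (some true) = pathEdge σ b := by
  funext j
  have hlt : a < b := by rw [Fin.lt_def]; omega
  by_cases ha : j = σ a
  · simp [swapSquare, pathEdge, pathVertex, update_apply, ha, hlt, hlt.ne]
  by_cases hb : j = σ b
  · simp [swapSquare, pathEdge, hb, hlt.ne']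
  have hja : σ.symm j ≠ a := mt (symm_apply_eq σ).1 ha
  have hjb : σ.symm j ≠ b := mt (symm_apply_eq σ).1 hb
  have hj : σ.symm j < a ↔ σ.symm j < b := by
    simp only [Fin.lt_def, ← Fin.val_ne_iff] at hja hjb ⊢
    omega
  simp [swapSquare, pathEdge, pathVertex, ha, hb, hj]

theorem pathVertex_mul_swap (hab : (a : ℕ) + 1 = b) {i : ℕ} (hib : i ≠ b) :
    pathVertex (σ * swap a b) i = pathVertex σ i := by
  funext j
  simp only [pathVertex, symm_mul_swap_apply, decide_eq_decide]
  rw [swap_apply_def]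
  split_ifs with hka hkb
  · rw [hka]; omega
  · rw [hkb]; omega
  · rfl

theorem pathEdge_mul_swap_of_ne (hab : (a : ℕ) + 1 = b) {i : Fin n} (hia : i ≠ a) (hib : i ≠ b) :
    pathEdge (σ * swap a b) i = pathEdge σ i := by
  rw [pathEdge, pathEdge, Perm.mul_apply, swap_apply_of_ne_of_ne hia hib,
    pathVertex_mul_swap hab (Fin.val_ne_of_ne hib)]

theorem prod_pathEdge_mul_swap {ε : Face n → ℤ}
    (h : ∀ s : Face n, IsSq s → pSq n s ε = -1) (hab : (a : ℕ) + 1 = b) :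
    ∏ i, ε (pathEdge (σ * swap a b) i) = -∏ i, ε (pathEdge σ i) := by
  have hlt : a < b := by rw [Fin.lt_def]; omega
  have hσab : σ a ≠ σ b := σ.injective.ne hlt.ne
  have hσ'a : update (swapSquare σ a b) (σ a) (some false) = pathEdge (σ * swap a b) a := by
    have := update_swapSquare_false (σ := σ * swap a b) hlt
    rwa [swapSquare_mul_swap, Perm.mul_apply, swap_apply_right] at this
  have hσ'b : update (swapSquare σ a b) (σ b) (some true) = pathEdge (σ * swap a b) b := by
    have := update_swapSquare_true (σ := σ * swap a b) hab
    rwa [swapSquare_mul_swap, Perm.mul_apply, swap_apply_left] at this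
  have hsq := h _ (isSq_of_forall_eq_none_iff hσab swapSquare_eq_none_iff)
  rw [pSq_eq hσab swapSquare_eq_none_iff, update_swapSquare_true hab,
    update_swapSquare_false hlt, hσ'a, hσ'b] at hsq
  -- `u * v = -1` in `ℤ` forces `u = ±1`, hence `v = -u`.
  have hpair : ε (pathEdge (σ * swap a b) a) * ε (pathEdge (σ * swap a b) b) =
      -(ε (pathEdge σ a) * ε (pathEdge σ b)) := by
    rcases Int.eq_one_or_neg_one_of_mul_eq_neg_one' (u := ε (pathEdge σ a) * ε (pathEdge σ b))
      (v := ε (pathEdge (σ * swap a b) a) * ε (pathEdge (σ * swap a b) b))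
      (by linear_combination hsq) with ⟨hu, hv⟩ | ⟨hu, hv⟩ <;> simp [hu, hv]
  have hsplit (ρ : Perm (Fin n)) : ∏ i, ε (pathEdge ρ i) =
      ε (pathEdge ρ a) * ε (pathEdge ρ b) * ∏ i ∈ {a, b}ᶜ, ε (pathEdge ρ i) := by
    rw [← Finset.prod_mul_prod_compl {a, b}, Finset.prod_pair hlt.ne]
  have hrest : ∏ i ∈ {a, b}ᶜ, ε (pathEdge (σ * swap a b) i) = ∏ i ∈ {a, b}ᶜ, ε (pathEdge σ i) :=
    Finset.prod_congr rfl fun i hi => by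
      simp only [Finset.mem_compl, Finset.mem_insert, Finset.mem_singleton, not_or] at hi
      rw [pathEdge_mul_swap_of_ne hab hi.1 hi.2]
  rw [hsplit, hsplit σ, hpair, hrest]
  ring

end Swap

theorem eps_sign_path_independent_general (n : ℕ) (ε : Face n → ℤ)
    (h : ∀ s : Face n, IsSq s → pSq n s ε = -1)
    (θ ζ : Fin n → Face n)
    (hθ : IsPathFromTo n n θ (fun _ => false) (fun _ => true))
    (hζ : IsPathFromTo n n ζ (fun _ => false) (fun _ => true))
    (σ τ : Equiv.Perm (Fin n))
    (hσ : ∀ i, θ i (σ i) = none) (hτ : ∀ i, ζ i (τ i) = none) :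
    (∏ i, ε (θ i)) * ((Equiv.Perm.sign σ : ℤˣ) : ℤ)
      = (∏ i, ε (ζ i)) * ((Equiv.Perm.sign τ : ℤˣ) : ℤ) := by
  rw [eq_pathEdge_of_isPathFromTo hθ hσ, eq_pathEdge_of_isPathFromTo hζ hτ]
  refine Equiv.Perm.eq_of_mul_swap_succ_invariant
    (fun ρ => (∏ i, ε (pathEdge ρ i)) * ((Equiv.Perm.sign ρ : ℤˣ) : ℤ)) (fun ρ a b hab => ?_) σ τ
  have hab' : a ≠ b := Fin.ne_of_val_ne (by omega)
  rw [prod_pathEdge_mul_swap h hab]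
  simp only [Equiv.Perm.sign_mul, Equiv.Perm.sign_swap hab',
    Units.val_mul, Units.val_neg, Units.val_one]
  ring

/-- If `ε` is a `{−1,1}`-valued function on the edges with `p(s,ε) = −1` for every
square, then `ε(θ) · sign(φ(θ))` is the same for every monotone path of edges `θ`
of length `n` from `(0,…,0)` to `(1,…,1)`, where `φ(θ)(i)` is the position of the
`*` coordinate of `θᵢ`. -/
theorem eps_sign_path_independent (n : ℕ) (ε : Face n → ℤ)
    (hε : ∀ a : Face n, IsEdge a → ε a = 1 ∨ ε a = -1)
    (h : ∀ s : Face n, IsSq s → pSq n s ε = -1)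
    (θ ζ : Fin n → Face n)
    (hθ : IsPathFromTo n n θ (fun _ => false) (fun _ => true))
    (hζ : IsPathFromTo n n ζ (fun _ => false) (fun _ => true))
    (σ τ : Equiv.Perm (Fin n))
    (hσ : ∀ i, θ i (σ i) = none) (hτ : ∀ i, ζ i (τ i) = none) :
    (∏ i, ε (θ i)) * ((Equiv.Perm.sign σ : ℤˣ) : ℤ)
      = (∏ i, ε (ζ i)) * ((Equiv.Perm.sign τ : ℤˣ) : ℤ) :=
  eps_sign_path_independent_general n ε h θ ζ hθ hζ σ τ hσ hτ
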